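/- arXiv:1304.1207 — 2 statements merged into one kernel-verified Lean document; each statement's English description precedes it below -/
import Mathlib

section
/- Let 𝒫 and 𝒬 be Fourier-reflexive partitions of a finite abelian group G. Then the join 𝒫 ∨ 𝒬 (the finest partition coarser than both 𝒫 and 𝒬) is Fourier-reflexive, and its dual partition satisfies (𝒫 ∨ 𝒬)̂ = 𝒫̂ ∨ 𝒬̂. -/
open Finset
open scoped Classical

variable {G : Type*} [AddCommGroup G] [Fintype G]

/-- The sum `Σ_{g ∈ P_c} χ(g)` of the character `χ` over the block of the partition
(setoid) `P` of `G` indexed by `c`. -/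
noncomputable def blockSum (P : Setoid G) (χ : AddChar G ℂ) (c : Quotient P) : ℂ :=
  ∑ g : G, if Quotient.mk P g = c then χ g else 0

/-- The dual partition `P̂` of the character group `Ĝ`:  `χ ∼ χ'` iff the sums of `χ` and of
`χ'` over each block of `P` agree. -/
noncomputable def dualSetoid (P : Setoid G) : Setoid (AddChar G ℂ) :=
  Setoid.ker (blockSum P)

/-- The sum `Σ_{χ ∈ Q_c} χ(g)` over the block of the dual partition indexed by `c`. -/
noncomputable def dualBlockSum (P : Setoid G) (g : G) (c : Quotient (dualSetoid P)) : ℂ :=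
  ∑ᶠ χ : AddChar G ℂ, if Quotient.mk (dualSetoid P) χ = c then χ g else 0

/-- The bidual partition `P̂̂`, viewed as a partition of `G` by identifying the double
character group with `G` via `g(χ) = χ(g)`. -/
noncomputable def bidualSetoid (P : Setoid G) : Setoid G :=
  Setoid.ker (dualBlockSum P)

/-!
Both `P ↦ P̂` and the analogous map `S ↦ Š` from partitions of `Ĝ` to partitions of `G` (block
sums of `χ ↦ χ g`) are monotone, and orthogonality of characters makes both composites finer
than the identity: `(P̂)̌ ≤ P` and `(Š)̂ ≤ S`; the bidual is `P̂̂ = (P̂)̌`. For reflexive `P` and `Q` this gives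
`P ∨ Q ≤ (P̂ ∨ Q̂)̌`, hence `(P ∨ Q)̂ ≤ (P̂ ∨ Q̂)̌̂ ≤ P̂ ∨ Q̂`, the reverse inequality being
monotonicity, and then `(P ∨ Q)̂̂ = (P̂ ∨ Q̂)̌ ≥ P ∨ Q`. Only the orthogonality of the rows and of
the columns of the character table `(g, χ) ↦ χ g` enters.
-/

open scoped ComplexConjugate

theorem sum_mul_eq_sum_mul_sum_fiber {ι κ R : Type*} [Fintype ι] [Fintype κ] [DecidableEq κ]
    [NonUnitalNonAssocSemiring R] (π : ι → κ) (F : κ → R) (g : ι → R) :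
    ∑ i, F (π i) * g i = ∑ k, F k * ∑ i, if π i = k then g i else 0 := by
  simp only [mul_sum, mul_ite, mul_zero]
  rw [sum_comm]
  simp

section Pairing

variable {A B : Type*} [Fintype A]

noncomputable def pairingBlockSum (e : A → B → ℂ) (S : Setoid A) (b : B) (c : Quotient S) : ℂ :=
  ∑ a, if Quotient.mk S a = c then e a b else 0

noncomputable def pairingDual (e : A → B → ℂ) (S : Setoid A) : Setoid B :=
  Setoid.ker (pairingBlockSum e S)

theorem pairingBlockSum_eq_sum_of_le (e : A → B → ℂ) {S S' : Setoid A} (h : S ≤ S') (b : B)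
    (c' : Quotient S') :
    pairingBlockSum e S' b c' =
      ∑ c, (if Setoid.map_of_le h c = c' then 1 else 0) * pairingBlockSum e S b c := by
  unfold pairingBlockSum
  rw [← sum_mul_eq_sum_mul_sum_fiber]
  simp only [ite_mul, one_mul, zero_mul]
  rfl

theorem pairingDual_mono (e : A → B → ℂ) : Monotone (pairingDual e) := by
  intro S S' h b b' hb
  have hb' : pairingBlockSum e S b = pairingBlockSum e S b' := hb
  funext c'
  rw [pairingBlockSum_eq_sum_of_le e h, pairingBlockSum_eq_sum_of_le e h, hb']

theorem sum_pairingBlockSum_mul_conj [Fintype B] {e : A → B → ℂ} {n : ℂ}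
    (horth : ∀ a a', ∑ b, e a b * conj (e a' b) = if a = a' then n else 0)
    (S : Setoid A) (x : A) (m : Quotient S) :
    ∑ b, pairingBlockSum e S b m * conj (e x b) = if Quotient.mk S x = m then n else 0 := by
  simp only [pairingBlockSum, sum_mul, ite_mul, zero_mul]
  rw [sum_comm]
  simp only [sum_ite_irrel, sum_const_zero, horth]
  rw [Fintype.sum_eq_single x fun y hy => by simp [hy]]
  simp

/-- The sum `∑ b, pairingBlockSum e S b m * conj (e z b)` equals `n` or `0` according as `z ∈ m`,
and it depends on `z` only through its block sums over the blocks of `pairingDual e S`. -/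
theorem pairingDual_flip_pairingDual_le [Fintype B] {e : A → B → ℂ} {n : ℂ}
    (horth : ∀ a a', ∑ b, e a b * conj (e a' b) = if a = a' then n else 0) (hn : n ≠ 0)
    (S : Setoid A) : pairingDual (flip e) (pairingDual e S) ≤ S := by
  intro x y hxy
  have hsum : ∀ z, ∑ b, pairingBlockSum e S b ⟦y⟧ * conj (e z b) =
      ∑ c : Quotient (pairingDual e S), Setoid.kerLift (pairingBlockSum e S) c ⟦y⟧ *
        conj (pairingBlockSum (flip e) (pairingDual e S) z c) := by
    intro z
    refine (sum_mul_eq_sum_mul_sum_fiber (Quotient.mk (pairingDual e S))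
      (fun c : Quotient (pairingDual e S) => Setoid.kerLift _ c ⟦y⟧) _).trans ?_
    simp only [pairingBlockSum, map_sum]
    congr! 3 with c _ b
    split_ifs <;> simp [flip]
  have hxy' : pairingBlockSum (flip e) (pairingDual e S) x =
      pairingBlockSum (flip e) (pairingDual e S) y := hxy
  have key : (if Quotient.mk S x = ⟦y⟧ then n else 0) = n := by
    rw [← sum_pairingBlockSum_mul_conj horth, hsum, hxy', ← hsum,
      sum_pairingBlockSum_mul_conj horth, if_pos rfl]
  by_contra hne
  rw [if_neg fun h => hne (Quotient.exact h)] at key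
  exact hn key.symm

end Pairing

theorem fixed_sup_and_map_sup_of_comp_le {α β : Type*} [SemilatticeSup α] [SemilatticeSup β]
    {D : α → β} {C : β → α} (hD : Monotone D) (hC : Monotone C) (hCD : ∀ x, C (D x) ≤ x)
    (hDC : ∀ y, D (C y) ≤ y) {p q : α} (hp : C (D p) = p) (hq : C (D q) = q) :
    C (D (p ⊔ q)) = p ⊔ q ∧ D (p ⊔ q) = D p ⊔ D q := by
  have hle : p ⊔ q ≤ C (D p ⊔ D q) :=
    sup_le (hp.symm.le.trans (hC le_sup_left)) (hq.symm.le.trans (hC le_sup_right))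
  have hmap : D (p ⊔ q) = D p ⊔ D q :=
    le_antisymm ((hD hle).trans (hDC _)) (sup_le (hD le_sup_left) (hD le_sup_right))
  exact ⟨le_antisymm (hCD _) (hmap ▸ hle), hmap⟩

theorem AddChar.sum_apply_mul_conj_apply_eq_ite (g g' : G) :
    ∑ χ : AddChar G ℂ, χ g * conj (χ g') = if g = g' then (Fintype.card G : ℂ) else 0 := by
  simp_rw [← AddChar.map_neg_eq_conj, ← AddChar.map_add_eq_mul, AddChar.sum_apply_eq_ite,
    ← sub_eq_add_neg, sub_eq_zero]

theorem AddChar.sum_mul_conj_eq_ite (χ χ' : AddChar G ℂ) :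
    ∑ g, χ g * conj (χ' g) = if χ = χ' then (Fintype.card G : ℂ) else 0 := by
  simp_rw [← AddChar.map_neg_eq_conj, ← AddChar.sub_apply, AddChar.sum_eq_ite, sub_eq_zero]

theorem dualSetoid_eq_pairingDual : dualSetoid = pairingDual fun (g : G) (χ : AddChar G ℂ) => χ g :=
  rfl

theorem bidualSetoid_eq_pairingDual (P : Setoid G) :
    bidualSetoid P = pairingDual (flip fun (g : G) (χ : AddChar G ℂ) => χ g) (dualSetoid P) := by
  unfold bidualSetoid dualBlockSum pairingDual pairingBlockSum
  simp_rw [finsum_eq_sum_of_fintype]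
  rfl

/-- If `P` and `Q` are Fourier-reflexive partitions of `G`, then their join `P ⊔ Q` (the
finest partition coarser than both) is Fourier-reflexive, and its dual partition is the
join of the dual partitions. -/
theorem join_reflexive_and_dual_join (P Q : Setoid G)
    (hP : bidualSetoid P = P) (hQ : bidualSetoid Q = Q) :
    bidualSetoid (P ⊔ Q) = P ⊔ Q ∧ dualSetoid (P ⊔ Q) = dualSetoid P ⊔ dualSetoid Q := by
  simp only [bidualSetoid_eq_pairingDual, dualSetoid_eq_pairingDual] at hP hQ ⊢
  have hcard : (Fintype.card G : ℂ) ≠ 0 := Nat.cast_ne_zero.mpr Fintype.card_ne_zero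
  exact fixed_sup_and_map_sup_of_comp_le (pairingDual_mono _) (pairingDual_mono _)
    (pairingDual_flip_pairingDual_le AddChar.sum_apply_mul_conj_apply_eq_ite hcard)
    (pairingDual_flip_pairingDual_le AddChar.sum_mul_conj_eq_ite hcard) hP hQ
end

section
/- Let R be a finite commutative ring with identity admitting a generating character χ, and let α : Rⁿ → (Rⁿ)̂, v ↦ χ_v with χ_v(a) = χ(v·a), be the induced isomorphism. For a submodule C ⊆ Rⁿ, let C^⊥⊥ = {v ∈ Rⁿ : v·a = 0 for all a ∈ C} be the dot-product dual and C^⊥ = {ψ ∈ (Rⁿ)̂ : ψ(a) = 1 for all a ∈ C} the character-theoretic dual. Then α(C^⊥⊥) = C^⊥. -/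
open Finset
open scoped Classical

variable {R : Type*} [CommRing R] [Fintype R]

/-- `χ` is a generating character of the finite commutative ring `R`:  the map `r ↦ r·χ`
(where `(r·χ)(a) = χ(r·a)`) is an `R`-module isomorphism from `R` to the character module
`R̂` (bijective, additive, and compatible with the scalar multiplications). -/
def IsGeneratingChar (χ : AddChar R ℂ) : Prop :=
  Function.Bijective (fun r : R => χ.mulShift r) ∧
  (∀ r s : R, χ.mulShift (r + s) = χ.mulShift r * χ.mulShift s) ∧
  (∀ r s a : R, χ.mulShift (r * s) a = χ.mulShift s (r * a))

/-- The character `χ_v : a ↦ χ(v·a)` of `(Rⁿ, +)`, where `v·a = Σ_i v_i a_i` is the dot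
product. -/
noncomputable def dotChar {n : ℕ} (χ : AddChar R ℂ) (v : Fin n → R) :
    AddChar (Fin n → R) ℂ :=
  χ.compAddMonoidHom
    { toFun := fun a => ∑ i, v i * a i
      map_zero' := by simp
      map_add' := fun a b => by simp [mul_add, Finset.sum_add_distrib] }

lemma AddChar.map_sum_eq_prod {A M ι : Type*} [AddCommMonoid A] [CommMonoid M]
    (ψ : AddChar A M) (s : Finset ι) (f : ι → A) : ψ (∑ i ∈ s, f i) = ∏ i ∈ s, ψ (f i) := by
  induction s using Finset.cons_induction with
  | empty => simp
  | cons i s hi ih => rw [Finset.sum_cons, Finset.prod_cons, AddChar.map_add_eq_mul, ih]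

lemma AddChar.apply_eq_prod_single {ι A M : Type*} [Fintype ι] [DecidableEq ι]
    [AddCommMonoid A] [CommMonoid M] (ψ : AddChar (ι → A) M) (a : ι → A) :
    ψ a = ∏ i, ψ (Pi.single i (a i)) := by
  conv_lhs => rw [← Finset.univ_sum_single a]
  exact ψ.map_sum_eq_prod _ _

section DotChar

variable {R : Type*} [CommRing R] {n : ℕ} (χ : AddChar R ℂ)

lemma dotChar_apply (v a : Fin n → R) : dotChar χ v a = χ (∑ i, v i * a i) := rfl

lemma dotChar_smul (v a : Fin n → R) (r : R) :
    dotChar χ v (r • a) = χ.mulShift (∑ i, v i * a i) r := by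
  simp only [dotChar_apply, AddChar.mulShift_apply, Finset.sum_mul, Pi.smul_apply, smul_eq_mul]
  congr 1
  exact Finset.sum_congr rfl fun i _ => by ring

/-- Every character of `Rⁿ` is determined by its restrictions to the coordinate axes, and each of
those is of the form `χ.mulShift vᵢ`. -/
lemma exists_dotChar_eq (hχ : Function.Surjective fun r : R => χ.mulShift r)
    (ψ : AddChar (Fin n → R) ℂ) : ∃ v, dotChar χ v = ψ := by
  choose v hv using fun i => hχ (ψ.compAddMonoidHom (AddMonoidHom.single (fun _ => R) i))
  refine ⟨v, AddChar.ext _ _ fun a => ?_⟩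
  rw [dotChar_apply, χ.map_sum_eq_prod, ψ.apply_eq_prod_single]
  refine Finset.prod_congr rfl fun i _ => ?_
  simpa using DFunLike.congr_fun (hv i) (a i)

/-- Since `C` is closed under scalars, `χ_v` is trivial on `C` iff `χ.mulShift (v·a)` is trivial
for every `a ∈ C`, and injectivity of `r ↦ χ.mulShift r` turns this into `v·a = 0`. -/
lemma dotChar_eq_one_on_iff (hχ : Function.Injective fun r : R => χ.mulShift r)
    (C : Submodule R (Fin n → R)) (v : Fin n → R) :
    (∀ a ∈ C, dotChar χ v a = 1) ↔ ∀ a ∈ C, ∑ i, v i * a i = 0 := by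
  refine ⟨fun hv a ha => hχ ?_, fun hv a ha => by rw [dotChar_apply, hv a ha, χ.map_zero_eq_one]⟩
  ext r
  simpa [dotChar_smul] using hv (r • a) (C.smul_mem r ha)

end DotChar

/-- For a linear code `C ⊆ Rⁿ` over a finite commutative ring `R` with generating
character `χ`, the isomorphism `α : v ↦ χ_v` maps the dot-product dual
`C^⊥⊥ = {v : v·a = 0 ∀ a ∈ C}` onto the character-theoretic dual
`C^⊥ = {ψ : ψ(a) = 1 ∀ a ∈ C}`. -/
theorem image_dotDual_eq_charDual (n : ℕ) (χ : AddChar R ℂ) (hχ : IsGeneratingChar χ)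
    (C : Submodule R (Fin n → R)) :
    (fun v : Fin n → R => dotChar χ v) '' {v : Fin n → R | ∀ a ∈ C, ∑ i, v i * a i = 0} =
      {ψ : AddChar (Fin n → R) ℂ | ∀ a ∈ C, ψ a = 1} := by
  ext ψ
  constructor
  · rintro ⟨v, hv, rfl⟩
    exact (dotChar_eq_one_on_iff χ hχ.1.1 C v).2 hv
  · intro hψ
    obtain ⟨v, rfl⟩ := exists_dotChar_eq χ hχ.1.2 ψ
    exact ⟨v, (dotChar_eq_one_on_iff χ hχ.1.1 C v).1 hψ, rfl⟩
end
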